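/- arXiv:2507.23641 — 2 statements merged into one kernel-verified Lean document; each statement's English description precedes it below -/
import Mathlib

section
/- (Lenstra) Let b_1, …, b_n ∈ F_q[x]^n be a reduced basis of the lattice L, i.e., Σ_{i=1}^n |b_i| = deg(det B) where B is the matrix with rows b_1, …, b_n, ordered so that |b_1| ≤ |b_2| ≤ … ≤ |b_n|. Then for every 1 ≤ j ≤ n and every choice of j linearly independent vectors v_1, …, v_j ∈ L one has max{|v_1|, …, |v_j|} ≥ |b_j|. In particular |b_j| equals the j-th successive minimum of L. -/
open Polynomial

/-- The degree-norm of a vector of polynomials: `|a| = max_i deg(a_i)`,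
valued in `WithBot ℕ` (with `deg 0 = ⊥` playing the role of `-∞`). -/
def degNorm {F : Type*} [Field F] {n : ℕ} (v : Fin n → Polynomial F) : WithBot ℕ :=
  Finset.univ.sup fun i => (v i).degree

/-! Reducedness says that the coefficient of `det B` in degree `Σ |b_i|` is nonzero. That
coefficient is the determinant of the matrix of leading coefficient rows, so these rows are
linearly independent over `F`, and therefore the top-degree terms of `Σ c_i b_i` cannot cancel:
`|Σ c_i b_i| ≥ |b_k|` whenever `c_k ≠ 0`. Consequently a lattice vector of norm `< |b_j|` lies in
the span of `b_0, …, b_{j-1}`, which cannot contain `j + 1` linearly independent vectors. -/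

namespace Polynomial

theorem coeff_prod_sum_of_natDegree_le {R ι : Type*} [CommSemiring R] (s : Finset ι)
    (p : ι → R[X]) (d : ι → ℕ) (h : ∀ i ∈ s, (p i).natDegree ≤ d i) :
    (∏ i ∈ s, p i).coeff (∑ i ∈ s, d i) = ∏ i ∈ s, (p i).coeff (d i) := by
  induction s using Finset.cons_induction with
  | empty => simp
  | cons a s _ ih =>
    rw [Finset.prod_cons, Finset.sum_cons,
      coeff_mul_add_eq_of_natDegree_le (h a (Finset.mem_cons_self a s))
        ((natDegree_prod_le _ _).trans
          (Finset.sum_le_sum fun i hi => h i (Finset.mem_cons_of_mem hi))),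
      ih fun i hi => h i (Finset.mem_cons_of_mem hi), Finset.prod_cons]

theorem coeff_mul_of_natDegree_add_le {R : Type*} [Semiring R] {p q : R[X]} {e m : ℕ}
    (hq : q.natDegree ≤ e) (hm : p.natDegree + e ≤ m) :
    (p * q).coeff m = if p.natDegree + e = m then p.leadingCoeff * q.coeff e else 0 := by
  split_ifs with h
  · rw [← h, coeff_mul_add_eq_of_natDegree_le le_rfl hq, coeff_natDegree]
  · refine coeff_eq_zero_of_natDegree_lt ?_
    calc (p * q).natDegree ≤ p.natDegree + q.natDegree := natDegree_mul_le
      _ ≤ p.natDegree + e := Nat.add_le_add_left hq _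
      _ < m := lt_of_le_of_ne hm h

end Polynomial

/-- With `d i` the degree of row `i` of `M`, the matrix of leading coefficients of the rows
(entries of smaller degree contribute `0`). -/
def leadingCoeffMatrix {R ι κ : Type*} [Semiring R] (M : Matrix ι κ R[X]) (d : ι → ℕ) :
    Matrix ι κ R :=
  Matrix.of fun i k => (M i k).coeff (d i)

theorem coeff_det_eq_det_leadingCoeffMatrix {R ι : Type*} [CommRing R] [Fintype ι]
    [DecidableEq ι] (M : Matrix ι ι R[X]) (d : ι → ℕ) (h : ∀ i k, (M i k).natDegree ≤ d i) :
    M.det.coeff (∑ i, d i) = (leadingCoeffMatrix M d).det := by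
  rw [Matrix.det_apply', Matrix.det_apply', finsetSum_coeff]
  refine Finset.sum_congr rfl fun σ _ => ?_
  rw [← C_eq_intCast, coeff_C_mul, ← Equiv.sum_comp σ d,
    coeff_prod_sum_of_natDegree_le _ _ _ fun i _ => h (σ i) i]
  rfl

section DegNorm

variable {F : Type*} [Field F] {n : ℕ}

theorem degree_le_degNorm (v : Fin n → F[X]) (i : Fin n) : (v i).degree ≤ degNorm v :=
  Finset.le_sup (f := fun i => (v i).degree) (Finset.mem_univ i)

theorem degNorm_eq_bot_iff {v : Fin n → F[X]} : degNorm v = ⊥ ↔ v = 0 := by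
  simp [degNorm, funext_iff]

theorem natDegree_le_of_degNorm_eq {v : Fin n → F[X]} {d : ℕ} (h : degNorm v = d) (i : Fin n) :
    (v i).natDegree ≤ d :=
  natDegree_le_iff_degree_le.mpr (h ▸ degree_le_degNorm v i)

/-- The predictable degree property. -/
theorem le_degNorm_sum_smul {ι : Type*} [Fintype ι] {b : ι → Fin n → F[X]} {d : ι → ℕ}
    (hd : ∀ i k, (b i k).natDegree ≤ d i)
    (hL : LinearIndependent F (leadingCoeffMatrix (Matrix.of b) d).row)
    (c : ι → F[X]) {k : ι} (hk : c k ≠ 0) :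
    ((c k).natDegree + d k : ℕ) ≤ degNorm (∑ i, c i • b i) := by
  classical
  set T := Finset.univ.filter fun i => c i ≠ 0
  have hkT : k ∈ T := Finset.mem_filter.mpr ⟨Finset.mem_univ k, hk⟩
  set m := T.sup' ⟨k, hkT⟩ fun i => (c i).natDegree + d i
  have hle : ∀ i ∈ T, (c i).natDegree + d i ≤ m := fun i hi =>
    Finset.le_sup' (fun i => (c i).natDegree + d i) hi
  obtain ⟨i₀, hi₀T, hi₀⟩ := Finset.exists_mem_eq_sup' ⟨k, hkT⟩ fun i => (c i).natDegree + d i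
  -- the coefficient in degree `m` of `∑ i, c i • b i` is `∑ i, a i • L i`, `L` the leading rows
  set a : ι → F := fun i => if (c i).natDegree + d i = m then (c i).leadingCoeff else 0
  have ha : a i₀ ≠ 0 := by
    rw [show a i₀ = (c i₀).leadingCoeff from if_pos hi₀.symm, Ne, leadingCoeff_eq_zero]
    exact (Finset.mem_filter.mp hi₀T).2
  obtain ⟨s, hs⟩ := Function.ne_iff.mp <| mt (Fintype.linearIndependent_iff.mp hL a · i₀) ha
  have hcoeff : ((∑ i, c i • b i) s).coeff m =
      (∑ i, a i • (leadingCoeffMatrix (Matrix.of b) d).row i) s := by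
    simp only [Finset.sum_apply, Pi.smul_apply, smul_eq_mul, finsetSum_coeff]
    refine Finset.sum_congr rfl fun i _ => ?_
    by_cases hci : c i = 0
    · simp [a, hci]
    · have hiT : i ∈ T := Finset.mem_filter.mpr ⟨Finset.mem_univ i, hci⟩
      rw [coeff_mul_of_natDegree_add_le (hd i s) (hle i hiT)]
      split_ifs <;> simp [a, leadingCoeffMatrix, *]
  calc ((c k).natDegree + d k : ℕ) ≤ (m : WithBot ℕ) := WithBot.coe_le_coe.mpr (hle k hkT)
    _ ≤ ((∑ i, c i • b i) s).degree := le_degree_of_ne_zero (hcoeff ▸ hs)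
    _ ≤ degNorm (∑ i, c i • b i) := degree_le_degNorm _ s

theorem coeff_eq_zero_of_degNorm_sum_smul_lt {ι : Type*} [Fintype ι] {b : ι → Fin n → F[X]}
    {d : ι → ℕ} (hd : ∀ i k, (b i k).natDegree ≤ d i)
    (hL : LinearIndependent F (leadingCoeffMatrix (Matrix.of b) d).row)
    {c : ι → F[X]} {k : ι} (h : degNorm (∑ i, c i • b i) < d k) : c k = 0 := by
  by_contra hk
  refine (le_degNorm_sum_smul hd hL c hk).not_gt (h.trans_le ?_)
  exact WithBot.coe_le_coe.mpr (Nat.le_add_left _ _)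

theorem linearIndependent_leadingCoeffMatrix_row {ι : Type*} [Fintype ι] [DecidableEq ι]
    {M : Matrix ι ι F[X]} {d : ι → ℕ} (hd : ∀ i k, (M i k).natDegree ≤ d i)
    (hdet : M.det.degree = (∑ i, d i : ℕ)) :
    LinearIndependent F (leadingCoeffMatrix M d).row := by
  rw [Matrix.linearIndependent_rows_iff_isUnit, Matrix.isUnit_iff_isUnit_det, isUnit_iff_ne_zero,
    ← coeff_det_eq_det_leadingCoeffMatrix M d hd]
  exact coeff_ne_zero_of_eq_degree hdet

theorem mem_span_image_Iio_of_degNorm_lt {b : Fin n → Fin n → F[X]} {d : Fin n → ℕ}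
    (hd : ∀ i k, (b i k).natDegree ≤ d i)
    (hL : LinearIndependent F (leadingCoeffMatrix (Matrix.of b) d).row) (hsorted : Monotone d)
    {w : Fin n → F[X]} (hw : w ∈ Submodule.span F[X] (Set.range b)) {j : Fin n}
    (hlt : degNorm w < d j) :
    w ∈ Submodule.span F[X] (b '' Set.Iio j) := by
  obtain ⟨c, rfl⟩ := (Submodule.mem_span_range_iff_exists_fun _).mp hw
  refine Submodule.sum_mem _ fun k _ => ?_
  by_cases hkj : k < j
  · exact Submodule.smul_mem _ _ (Submodule.subset_span ⟨k, hkj, rfl⟩)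
  · suffices c k = 0 by simp [this]
    exact coeff_eq_zero_of_degNorm_sum_smul_lt hd hL <|
      hlt.trans_le (WithBot.coe_le_coe.mpr (hsorted (not_lt.mp hkj)))

end DegNorm

theorem reduced_basis_attains_successive_minima_general {F : Type*} [Field F] {n : ℕ}
    (b : Fin n → (Fin n → Polynomial F))
    (hb : LinearIndependent (Polynomial F) b)
    (hred : ∑ i, degNorm (b i) = (Matrix.of b).det.degree)
    (hsorted : Monotone fun i => degNorm (b i))
    (j : Fin n) (v : Fin (j.1 + 1) → (Fin n → Polynomial F))
    (hvL : ∀ i, v i ∈ Submodule.span (Polynomial F) (Set.range b))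
    (hvind : LinearIndependent (Polynomial F) v) :
    degNorm (b j) ≤ Finset.univ.sup fun i => degNorm (v i) := by
  classical
  have hbot i : degNorm (b i) ≠ ⊥ := degNorm_eq_bot_iff.not.mpr (hb.ne_zero i)
  set D : Fin n → ℕ := fun i => (degNorm (b i)).unbot (hbot i)
  have hD i : degNorm (b i) = D i := (WithBot.coe_unbot _ _).symm
  have hdeg i : ∀ k, (b i k).natDegree ≤ D i := natDegree_le_of_degNorm_eq (hD i)
  have hL := linearIndependent_leadingCoeffMatrix_row (M := Matrix.of b) hdeg <| by
    rw [← hred, Nat.cast_sum]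
    exact Finset.sum_congr rfl fun i _ => hD i
  have hDmono : Monotone D := fun k l hkl => by
    simpa only [hD, Nat.cast_le] using hsorted hkl
  by_contra! hlt
  have hspan i : v i ∈ Submodule.span F[X] ((Finset.Iio j).image b : Set (Fin n → F[X])) := by
    rw [Finset.coe_image, Finset.coe_Iio]
    exact mem_span_image_Iio_of_degNorm_lt hdeg hL hDmono (hvL i) <| hD j ▸
      (Finset.le_sup (f := fun i => degNorm (v i)) (Finset.mem_univ i)).trans_lt hlt
  have hcard := linearIndependent_le_span' v hvind _ (Set.range_subset_iff.mpr hspan)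
  simp only [Cardinal.mk_fintype, Fintype.card_fin, Finset.coe_sort_coe, Fintype.card_coe,
    Nat.cast_le] at hcard
  have hj : j.1 + 1 ≤ j.1 := hcard.trans (Finset.card_image_le.trans (Fin.card_Iio j).le)
  omega

/-- **(Lenstra)** Let `b_1, …, b_n` be a reduced basis of the lattice `L ⊆ F_q[x]^n`,
i.e. `Σ_i |b_i| = deg(det B)`, ordered so that `|b_1| ≤ … ≤ |b_n|`.  Then for every
`j` (here `j : Fin n`, corresponding to the `(j+1)`-st vector in one-based counting)
and every choice of `j+1` linearly independent vectors `v_0, …, v_j ∈ L` one has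
`max_i |v_i| ≥ |b_j|`; in particular `|b_j|` is the `j`-th successive minimum of `L`. -/
theorem reduced_basis_attains_successive_minima {F : Type*} [Field F] [Fintype F] {n : ℕ}
    (b : Fin n → (Fin n → Polynomial F))
    (hb : LinearIndependent (Polynomial F) b)
    (hred : ∑ i, degNorm (b i) = (Matrix.of b).det.degree)
    (hsorted : Monotone fun i => degNorm (b i))
    (j : Fin n) (v : Fin (j.1 + 1) → (Fin n → Polynomial F))
    (hvL : ∀ i, v i ∈ Submodule.span (Polynomial F) (Set.range b))
    (hvind : LinearIndependent (Polynomial F) v) :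
    degNorm (b j) ≤ Finset.univ.sup fun i => degNorm (v i) :=
  reduced_basis_attains_successive_minima_general b hb hred hsorted j v hvL hvind
end

section
/- (Mahler) Let L ⊆ F_q[x]^n be a lattice of full rank n, with covolume covol(L) = deg(det L). Then there exist n linearly independent vectors m_1, …, m_n ∈ L with Σ_{j=1}^n |m_j| = covol(L), and these attain the successive minima of L; in particular, for any n linearly independent vectors v_1, …, v_n ∈ L one has Σ_{j=1}^n |v_j| ≥ covol(L). -/
/-!
Call a family of vectors `m_i ∈ F[X]^n` row reduced when its leading vectors (the coefficients of
`m_i` in degree `|m_i|`) are `F`-linearly independent. For a square row reduced family, the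
coefficient of `det` in degree `Σ |m_i|` is the determinant of the leading vectors, so
`deg det = Σ |m_i|`; and the predictable degree property `|Σ c_k m_k| ≥ |m_k|` whenever
`c_k ≠ 0` holds. Every basis of `L` can be made row reduced: a dependency among the leading vectors
lets one replace the vector of largest degree involved in it by a combination of strictly smaller
degree, which lowers `Σ |m_i|`. Sorting a reduced basis by degree, the predictable degree property
puts every lattice vector of degree `< |m_j|` in the span of `m_1, …, m_{j-1}`, which gives the
successive minima. The lower bound holds because `det L` divides the determinant of any `n`
vectors of `L`.
-/

open Polynomial

open Finset Submodule

theorem Polynomial.coeff_prod_sum_of_natDegree_le_s5 {R ι : Type*} [CommSemiring R]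
    (s : Finset ι) (f : ι → R[X]) (e : ι → ℕ) (h : ∀ i ∈ s, (f i).natDegree ≤ e i) :
    (∏ i ∈ s, f i).coeff (∑ i ∈ s, e i) = ∏ i ∈ s, (f i).coeff (e i) := by
  classical
  induction s using Finset.cons_induction with
  | empty => simp
  | cons a s _ ih =>
    rw [forall_mem_cons] at h
    have hrest : (∏ i ∈ s, f i).natDegree ≤ ∑ i ∈ s, e i :=
      (natDegree_prod_le _ _).trans (sum_le_sum h.2)
    rw [prod_cons, sum_cons, prod_cons, coeff_mul_add_eq_of_natDegree_le h.1 hrest, ih h.2]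

theorem Matrix.coeff_det_sum_of_natDegree_le {R ι : Type*} [CommRing R] [Fintype ι]
    [DecidableEq ι] (M : Matrix ι ι R[X]) (e : ι → ℕ) (h : ∀ i j, (M i j).natDegree ≤ e i) :
    M.det.coeff (∑ i, e i) = (Matrix.of fun i j => (M i j).coeff (e i)).det := by
  simp only [Matrix.det_apply, finsetSum_coeff, coeff_smul]
  refine sum_congr rfl fun σ _ => ?_
  rw [← Equiv.sum_comp σ e, coeff_prod_sum_of_natDegree_le_s5 _ _ _ fun i _ => h (σ i) i]
  rfl

theorem Matrix.det_dvd_det_of_mem_span {R ι : Type*} [CommRing R] [Fintype ι] [DecidableEq ι]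
    {m v : ι → ι → R} (hv : ∀ i, v i ∈ span R (Set.range m)) :
    (Matrix.of m).det ∣ (Matrix.of v).det := by
  choose c hc using fun i : ι => (mem_span_range_iff_exists_fun R).mp (hv i)
  have hcm : Matrix.of v = Matrix.of c * Matrix.of m := by
    ext i j
    simp [Matrix.mul_apply, ← hc i, Finset.sum_apply]
  rw [hcm, Matrix.det_mul]
  exact dvd_mul_left _ _

theorem linearIndependent_iff_det_ne_zero {R ι : Type*} [CommRing R] [IsDomain R] [Fintype ι]
    [DecidableEq ι] (m : ι → ι → R) :
    LinearIndependent R m ↔ (Matrix.of m).det ≠ 0 :=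
  Matrix.linearIndependent_row_iff.trans Matrix.nonsingular_iff_det_ne_zero

theorem linearIndependent_of_mem_span {R ι : Type*} [CommRing R] [IsDomain R] [Fintype ι]
    [DecidableEq ι] {m v : ι → ι → R} (hv : ∀ i, v i ∈ span R (Set.range m))
    (hvli : LinearIndependent R v) : LinearIndependent R m := by
  rw [linearIndependent_iff_det_ne_zero] at hvli ⊢
  exact fun h0 => hvli (zero_dvd_iff.mp (h0 ▸ Matrix.det_dvd_det_of_mem_span hv))

theorem Submodule.span_range_update_sum_smul {R M ι : Type*} [Ring R] [AddCommGroup M]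
    [Module R M] [Fintype ι] [DecidableEq ι] (m : ι → M) (c : ι → R) {k : ι}
    (hc : IsUnit (c k)) :
    span R (Set.range (Function.update m k (∑ i, c i • m i))) = span R (Set.range m) := by
  set N := span R (Set.range (Function.update m k (∑ i, c i • m i)))
  have hN : ∀ i ≠ k, m i ∈ N := fun i hi =>
    Function.update_of_ne hi (∑ i, c i • m i) m ▸ subset_span ⟨i, rfl⟩
  refine le_antisymm (span_le.mpr ?_) (span_le.mpr ?_) <;> rintro _ ⟨i, rfl⟩
  · rcases eq_or_ne i k with rfl | hi
    · rw [Function.update_self]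
      exact sum_mem fun j _ => smul_mem _ _ (subset_span ⟨j, rfl⟩)
    · rw [Function.update_of_ne hi]
      exact subset_span ⟨i, rfl⟩
  · rcases eq_or_ne i k with rfl | hi
    · have hsum : ∑ j, c j • m j ∈ N := by
        simpa using (subset_span ⟨i, rfl⟩ : Function.update m i (∑ j, c j • m j) i ∈ N)
      rw [← Finset.add_sum_erase _ _ (mem_univ i)] at hsum
      refine (smul_mem_iff_of_isUnit N hc).mp ((add_mem_cancel_right ?_).mp hsum)
      exact sum_mem fun j hj => smul_mem _ _ (hN j (ne_of_mem_erase hj))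
    · exact hN i hi

section

variable {F : Type*} [Field F] {n : ℕ} {ι : Type*}

def natNorm (v : Fin n → F[X]) : ℕ :=
  univ.sup fun j => (v j).natDegree

def leadingVector (v : Fin n → F[X]) : Fin n → F :=
  fun j => (v j).coeff (natNorm v)

def IsRowReduced (m : ι → Fin n → F[X]) : Prop :=
  LinearIndependent F fun i => leadingVector (m i)

theorem natDegree_le_natNorm (v : Fin n → F[X]) (j : Fin n) : (v j).natDegree ≤ natNorm v :=
  le_sup (f := fun j => (v j).natDegree) (mem_univ j)

theorem natNorm_le_iff {v : Fin n → F[X]} {d : ℕ} :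
    natNorm v ≤ d ↔ ∀ j, (v j).natDegree ≤ d := by
  simp [natNorm, Finset.sup_le_iff]

theorem exists_natDegree_eq_natNorm {v : Fin n → F[X]} (hv : v ≠ 0) :
    ∃ j, v j ≠ 0 ∧ (v j).natDegree = natNorm v := by
  obtain ⟨j₀, hj₀⟩ := Function.ne_iff.mp hv
  obtain ⟨j, -, hj⟩ := exists_mem_eq_sup univ ⟨j₀, mem_univ j₀⟩ fun j => (v j).natDegree
  by_cases hvj : v j = 0
  · refine ⟨j₀, hj₀, (natDegree_le_natNorm v j₀).antisymm ?_⟩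
    simp [natNorm, hj, hvj]
  · exact ⟨j, hvj, hj.symm⟩

theorem degNorm_eq_natNorm {v : Fin n → F[X]} (hv : v ≠ 0) : degNorm v = natNorm v := by
  obtain ⟨j, hvj, hj⟩ := exists_natDegree_eq_natNorm hv
  refine (Finset.sup_le fun i _ => ?_).antisymm ?_
  · exact degree_le_natDegree.trans (by exact_mod_cast natDegree_le_natNorm v i)
  · rw [← hj, ← degree_eq_natDegree hvj]
    exact le_sup (f := fun j => (v j).degree) (mem_univ j)

theorem leadingVector_ne_zero {v : Fin n → F[X]} (hv : v ≠ 0) : leadingVector v ≠ 0 := by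
  obtain ⟨j, hvj, hj⟩ := exists_natDegree_eq_natNorm hv
  refine Function.ne_iff.mpr ⟨j, ?_⟩
  simpa [leadingVector, ← hj] using hvj

theorem IsRowReduced.ne_zero {m : ι → Fin n → F[X]} (hm : IsRowReduced m) (i : ι) :
    m i ≠ 0 := by
  rintro h
  exact LinearIndependent.ne_zero i hm (by ext j; simp [leadingVector, h])

theorem degree_det_le_sum_degNorm (m : Fin n → Fin n → F[X]) :
    (Matrix.of m).det.degree ≤ ∑ i, degNorm (m i) := by
  rw [Matrix.det_apply]
  refine (degree_sum_le _ _).trans (Finset.sup_le fun σ _ => ?_)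
  calc ((Equiv.Perm.sign σ : ℤ) • ∏ i, m (σ i) i).degree
      ≤ ∑ i, (m (σ i) i).degree := (degree_smul_le _ _).trans (degree_prod_le _ _)
    _ ≤ ∑ i, degNorm (m (σ i)) :=
        sum_le_sum fun i _ => le_sup (f := fun j => (m (σ i) j).degree) (mem_univ i)
    _ = ∑ i, degNorm (m i) := Equiv.sum_comp σ fun i => degNorm (m i)

theorem IsRowReduced.degree_det {m : Fin n → Fin n → F[X]} (hm : IsRowReduced m) :
    (Matrix.of m).det.degree = ∑ i, degNorm (m i) := by
  have hsum : ∑ i, degNorm (m i) = ((∑ i, natNorm (m i) : ℕ) : WithBot ℕ) := by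
    rw [Nat.cast_sum]
    exact sum_congr rfl fun i _ => degNorm_eq_natNorm (hm.ne_zero i)
  refine (degree_det_le_sum_degNorm m).antisymm ?_
  rw [hsum]
  refine le_degree_of_ne_zero ?_
  rw [Matrix.coeff_det_sum_of_natDegree_le (Matrix.of m) _ fun i => natDegree_le_natNorm (m i)]
  exact (linearIndependent_iff_det_ne_zero _).mp hm

theorem degree_det_le_of_mem_span {m v : Fin n → Fin n → F[X]}
    (hv : ∀ i, v i ∈ span F[X] (Set.range m)) (hvli : LinearIndependent F[X] v) :
    (Matrix.of m).det.degree ≤ (Matrix.of v).det.degree :=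
  degree_le_of_dvd (Matrix.det_dvd_det_of_mem_span hv)
    ((linearIndependent_iff_det_ne_zero v).mp hvli)

theorem degree_det_eq_of_span_eq {m v : Fin n → Fin n → F[X]}
    (h : span F[X] (Set.range m) = span F[X] (Set.range v)) :
    (Matrix.of m).det.degree = (Matrix.of v).det.degree :=
  degree_eq_degree_of_associated <| associated_of_dvd_dvd
    (Matrix.det_dvd_det_of_mem_span fun i => h ▸ subset_span (Set.mem_range_self i))
    (Matrix.det_dvd_det_of_mem_span fun i => h ▸ subset_span (Set.mem_range_self i))

theorem natNorm_sum_smul_le [Fintype ι] {m : ι → Fin n → F[X]} {c : ι → F[X]} {D : ℕ}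
    (hD : ∀ k, c k ≠ 0 → (c k).natDegree + natNorm (m k) ≤ D) :
    natNorm (∑ k, c k • m k) ≤ D := by
  refine natNorm_le_iff.mpr fun j => ?_
  simp only [Finset.sum_apply, Pi.smul_apply, smul_eq_mul]
  refine natDegree_sum_le_of_forall_le _ _ fun k _ => ?_
  by_cases hk : c k = 0
  · simp [hk]
  · exact natDegree_mul_le.trans
      ((Nat.add_le_add_left (natDegree_le_natNorm _ _) _).trans (hD k hk))

theorem coeff_sum_smul_eq_sum_smul_leadingVector [Fintype ι] {m : ι → Fin n → F[X]}
    {c : ι → F[X]} {D : ℕ}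
    (hD : ∀ k, c k ≠ 0 → (c k).natDegree + natNorm (m k) ≤ D) :
    (fun j => ((∑ k, c k • m k) j).coeff D) =
      ∑ k, (c k).coeff (D - natNorm (m k)) • leadingVector (m k) := by
  ext j
  simp only [Finset.sum_apply, Pi.smul_apply, smul_eq_mul, finsetSum_coeff]
  refine sum_congr rfl fun k _ => ?_
  by_cases hk : c k = 0
  · simp [hk]
  · have hDk := hD k hk
    have h := coeff_mul_add_eq_of_natDegree_le
      (show (c k).natDegree ≤ D - natNorm (m k) by omega) (natDegree_le_natNorm (m k) j)
    rwa [Nat.sub_add_cancel (by omega)] at h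

theorem IsRowReduced.natNorm_le_degNorm_sum_smul [Fintype ι] {m : ι → Fin n → F[X]}
    (hm : IsRowReduced m) (c : ι → F[X]) {k₀ : ι} (hc : c k₀ ≠ 0) :
    (natNorm (m k₀) : WithBot ℕ) ≤ degNorm (∑ k, c k • m k) := by
  classical
  set s := univ.filter fun k => c k ≠ 0
  have hk₀ : k₀ ∈ s := by simpa [s] using hc
  obtain ⟨k₁, hk₁, hDk₁⟩ := exists_mem_eq_sup' ⟨k₀, hk₀⟩ fun k => (c k).natDegree + natNorm (m k)
  set D := s.sup' ⟨k₀, hk₀⟩ fun k => (c k).natDegree + natNorm (m k)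
  have hD : ∀ k, c k ≠ 0 → (c k).natDegree + natNorm (m k) ≤ D := fun k hk =>
    le_sup' (fun k => (c k).natDegree + natNorm (m k)) (by simpa [s] using hk)
  -- the weight of `leadingVector (m k₁)` is the leading coefficient of `c k₁`
  have hcoeff : ∑ k, (c k).coeff (D - natNorm (m k)) • leadingVector (m k) ≠ 0 := by
    intro h0
    have := Fintype.linearIndependent_iff.mp hm _ h0 k₁
    rw [hDk₁, Nat.add_sub_cancel] at this
    exact (mem_filter.mp hk₁).2 (leadingCoeff_eq_zero.mp this)
  rw [← coeff_sum_smul_eq_sum_smul_leadingVector hD] at hcoeff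
  obtain ⟨j, hj⟩ := Function.ne_iff.mp hcoeff
  calc (natNorm (m k₀) : WithBot ℕ) ≤ D := by exact_mod_cast (Nat.le_add_left _ _).trans (hD k₀ hc)
    _ ≤ ((∑ k, c k • m k) j).degree := le_degree_of_ne_zero hj
    _ ≤ degNorm (∑ k, c k • m k) := le_sup (f := fun j => ((∑ k, c k • m k) j).degree) (mem_univ j)

theorem exists_isUnit_natNorm_sum_smul_lt [Fintype ι] {m : ι → Fin n → F[X]}
    (hli : LinearIndependent F[X] m) (hm : ¬IsRowReduced m) :
    ∃ (c : ι → F[X]) (k : ι), IsUnit (c k) ∧ natNorm (∑ i, c i • m i) < natNorm (m k) := by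
  classical
  obtain ⟨g, hg, k₀, hk₀⟩ := Fintype.not_linearIndependent_iff.mp hm
  set s := univ.filter fun i => g i ≠ 0
  have hk₀s : k₀ ∈ s := by simpa [s] using hk₀
  obtain ⟨k, hks, hDk⟩ := exists_mem_eq_sup' ⟨k₀, hk₀s⟩ fun i => natNorm (m i)
  set D := natNorm (m k)
  have hgk : g k ≠ 0 := (mem_filter.mp hks).2
  set c : ι → F[X] := fun i => monomial (D - natNorm (m i)) (g i)
  have hcD : ∀ i, c i ≠ 0 → (c i).natDegree + natNorm (m i) ≤ D := by
    intro i hi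
    have hgi : g i ≠ 0 := fun h => hi (by simp [c, h])
    have hiD : natNorm (m i) ≤ D := hDk ▸ le_sup' (fun i => natNorm (m i)) (by simpa [s] using hgi)
    have : (c i).natDegree ≤ D - natNorm (m i) := natDegree_monomial_le _
    omega
  have hck : c k = C (g k) := by simp [c, D]
  refine ⟨c, k, hck ▸ isUnit_C.mpr hgk.isUnit, (natNorm_sum_smul_le hcD).lt_of_ne fun hD => ?_⟩
  have hw : ∑ i, c i • m i ≠ 0 := fun h0 =>
    hgk (by simpa [hck] using Fintype.linearIndependent_iff.mp hli c h0 k)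
  -- at level `D` the combination cancels the dependency among the leading vectors
  refine leadingVector_ne_zero hw ?_
  have hlead := coeff_sum_smul_eq_sum_smul_leadingVector hcD
  simp only [c, coeff_monomial_same] at hlead
  unfold leadingVector
  rw [hD, hlead, hg]

theorem exists_sum_natNorm_lt_of_not_isRowReduced {m : Fin n → Fin n → F[X]}
    (hli : LinearIndependent F[X] m) (hm : ¬IsRowReduced m) :
    ∃ m' : Fin n → Fin n → F[X], span F[X] (Set.range m') = span F[X] (Set.range m) ∧
      LinearIndependent F[X] m' ∧ ∑ i, natNorm (m' i) < ∑ i, natNorm (m i) := by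
  obtain ⟨c, k, hck, hlt⟩ := exists_isUnit_natNorm_sum_smul_lt hli hm
  have hspan := span_range_update_sum_smul m c hck
  refine ⟨_, hspan, linearIndependent_of_mem_span (fun i => hspan ▸ subset_span ⟨i, rfl⟩) hli,
    sum_lt_sum (fun i _ => ?_) ⟨k, mem_univ k, by simpa using hlt⟩⟩
  rcases eq_or_ne i k with rfl | hi
  · simpa using hlt.le
  · rw [Function.update_of_ne hi]

theorem exists_isRowReduced {b : Fin n → Fin n → F[X]} (hb : LinearIndependent F[X] b) :
    ∃ m : Fin n → Fin n → F[X], span F[X] (Set.range m) = span F[X] (Set.range b) ∧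
      LinearIndependent F[X] m ∧ IsRowReduced m := by
  induction hN : ∑ i, natNorm (b i) using Nat.strong_induction_on generalizing b with
  | _ N ih =>
    by_cases hred : IsRowReduced b
    · exact ⟨b, rfl, hb, hred⟩
    obtain ⟨b', hspan, hli, hlt⟩ := exists_sum_natNorm_lt_of_not_isRowReduced hb hred
    obtain ⟨m, hm, hmli, hmred⟩ := ih _ (hN ▸ hlt) hli rfl
    exact ⟨m, hm.trans hspan, hmli, hmred⟩

theorem IsRowReduced.mem_span_image_Iio_of_degNorm_lt {m : Fin n → Fin n → F[X]}
    (hm : IsRowReduced m) (hmono : Monotone fun i => degNorm (m i)) {j : Fin n}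
    {v : Fin n → F[X]} (hv : v ∈ span F[X] (Set.range m)) (hlt : degNorm v < degNorm (m j)) :
    v ∈ span F[X] (m '' Set.Iio j) := by
  obtain ⟨c, rfl⟩ := (mem_span_range_iff_exists_fun F[X]).mp hv
  refine sum_mem fun k _ => ?_
  by_cases hk : k < j
  · exact smul_mem _ _ (subset_span ⟨k, hk, rfl⟩)
  · have hck : c k = 0 := by
      by_contra hck
      have hle := hm.natNorm_le_degNorm_sum_smul c hck
      rw [← degNorm_eq_natNorm (hm.ne_zero k)] at hle
      exact (hle.trans_lt hlt).not_ge (hmono (not_lt.mp hk))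
    simp [hck]

theorem IsRowReduced.degNorm_le_sup_of_linearIndependent {m : Fin n → Fin n → F[X]}
    (hm : IsRowReduced m) (hmono : Monotone fun i => degNorm (m i)) (j : Fin n)
    (v : Fin (j.1 + 1) → Fin n → F[X]) (hv : ∀ i, v i ∈ span F[X] (Set.range m))
    (hvli : LinearIndependent F[X] v) :
    degNorm (m j) ≤ univ.sup fun i => degNorm (v i) := by
  classical
  by_contra! hlt
  have hsub : Set.range v ⊆ span F[X] ((Iio j).image m : Set (Fin n → F[X])) := by
    rintro _ ⟨i, rfl⟩
    rw [coe_image, coe_Iio]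
    exact hm.mem_span_image_Iio_of_degNorm_lt hmono (hv i)
      ((le_sup (f := fun i => degNorm (v i)) (mem_univ i)).trans_lt hlt)
  have hcard := linearIndependent_le_span' v hvli _ hsub
  simp only [Cardinal.mk_fintype, Fintype.card_fin, Finset.coe_sort_coe, Fintype.card_coe,
    Nat.cast_le] at hcard
  have := (hcard.trans card_image_le).trans_eq (Fin.card_Iio j)
  omega

end

theorem mahler_sum_successive_minima_general {F : Type*} [Field F] {n : ℕ}
    (b : Fin n → (Fin n → Polynomial F))
    (hb : LinearIndependent (Polynomial F) b) :
    (∃ m : Fin n → (Fin n → Polynomial F),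
      (∀ i, m i ∈ Submodule.span (Polynomial F) (Set.range b)) ∧
      LinearIndependent (Polynomial F) m ∧
      (∑ j, degNorm (m j)) = (Matrix.of b).det.degree ∧
      (Monotone fun j => degNorm (m j)) ∧
      ∀ j : Fin n, ∀ v : Fin (j.1 + 1) → (Fin n → Polynomial F),
        (∀ i, v i ∈ Submodule.span (Polynomial F) (Set.range b)) →
        LinearIndependent (Polynomial F) v →
        degNorm (m j) ≤ Finset.univ.sup fun i => degNorm (v i)) ∧
    ∀ v : Fin n → (Fin n → Polynomial F),
      (∀ i, v i ∈ Submodule.span (Polynomial F) (Set.range b)) →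
      LinearIndependent (Polynomial F) v →
      (Matrix.of b).det.degree ≤ ∑ j, degNorm (v j) := by
  refine ⟨?_, fun v hv hvli =>
    (degree_det_le_of_mem_span hv hvli).trans (degree_det_le_sum_degNorm v)⟩
  obtain ⟨m₀, hspan₀, hli₀, hred₀⟩ := exists_isRowReduced hb
  set σ := Tuple.sort fun i => degNorm (m₀ i)
  have hspan : span F[X] (Set.range (m₀ ∘ σ)) = span F[X] (Set.range b) := by
    rw [σ.surjective.range_comp, hspan₀]
  have hred : IsRowReduced (m₀ ∘ σ) := hred₀.comp σ σ.injective
  have hmono : Monotone fun j => degNorm ((m₀ ∘ σ) j) := Tuple.monotone_sort fun i => degNorm (m₀ i)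
  refine ⟨m₀ ∘ σ, fun i => hspan ▸ subset_span ⟨i, rfl⟩, hli₀.comp σ σ.injective, ?_, hmono,
    fun j v hv => hred.degNorm_le_sup_of_linearIndependent hmono j v fun i => hspan ▸ hv i⟩
  rw [Function.comp_def, Equiv.sum_comp σ fun i => degNorm (m₀ i), ← hred₀.degree_det,
    degree_det_eq_of_span_eq hspan₀]

/-- **(Mahler)** Let `L ⊆ F_q[x]^n` be a full-rank lattice, spanned by linearly
independent `b_1, …, b_n`, with covolume `covol(L) = deg(det B)`.  Then there exist
`n` linearly independent vectors `m_1, …, m_n ∈ L` with `Σ_j |m_j| = covol(L)`, and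
these attain the successive minima of `L` (ordered by norm, `|m_j|` is at most the
max-norm of any `j` linearly independent vectors of `L`); in particular, for any `n`
linearly independent `v_1, …, v_n ∈ L` one has `Σ_j |v_j| ≥ covol(L)`. -/
theorem mahler_sum_successive_minima {F : Type*} [Field F] [Fintype F] {n : ℕ}
    (b : Fin n → (Fin n → Polynomial F))
    (hb : LinearIndependent (Polynomial F) b) :
    (∃ m : Fin n → (Fin n → Polynomial F),
      (∀ i, m i ∈ Submodule.span (Polynomial F) (Set.range b)) ∧
      LinearIndependent (Polynomial F) m ∧
      (∑ j, degNorm (m j)) = (Matrix.of b).det.degree ∧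
      (Monotone fun j => degNorm (m j)) ∧
      ∀ j : Fin n, ∀ v : Fin (j.1 + 1) → (Fin n → Polynomial F),
        (∀ i, v i ∈ Submodule.span (Polynomial F) (Set.range b)) →
        LinearIndependent (Polynomial F) v →
        degNorm (m j) ≤ Finset.univ.sup fun i => degNorm (v i)) ∧
    ∀ v : Fin n → (Fin n → Polynomial F),
      (∀ i, v i ∈ Submodule.span (Polynomial F) (Set.range b)) →
      LinearIndependent (Polynomial F) v →
      (Matrix.of b).det.degree ≤ ∑ j, degNorm (v j) :=
  mahler_sum_successive_minima_general b hb
end
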